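/- arXiv:2105.08720 — 3 statements merged into one kernel-verified Lean document; each statement's English description precedes it below -/
import Mathlib

section
/- Let n, m ≥ 1, let D ⊆ ℂⁿ and D' ⊆ ℂᵐ be open sets, let G be a complex Finsler metric on D and H a complex Finsler metric on D', and let f : D → D' be holomorphic. Define ũ : D → ℝ by ũ(z) = sup { H(f(z), f'(z)·v) : v ∈ ℂⁿ, G(z,v) = 1 }, where f'(z) : ℂⁿ → ℂᵐ is the complex derivative of f at z. Then ũ is continuous on D, and for every z ∈ D and every v ∈ ℂⁿ one has H(f(z), f'(z)·v) ≤ ũ(z) · G(z,v). -/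
/-!
By homogeneity, the ratio `H(f z, f'(z) v) / G(z, v)` is invariant under `v ↦ ζ v` for `ζ ≠ 0`,
so its supremum over the level set `G(z, ·) = 1` is its supremum over the unit sphere, which is
compact. The ratio is jointly continuous on `D × sphere` because the derivative of a holomorphic
map is jointly continuous in `(z, v)`: `f'(z) v` is the Cauchy integral of `t ↦ f (z + t v)` over
a small circle, which depends continuously on `(z, v)`. A supremum of a jointly continuous function
over a compact fibre is continuous, and the inequality says that each ratio is at most the
supremum.
-/

open Set Metric Filter Topology Complex Real

theorem IsCompact.continuousOn_sSup_image {α X Y : Type*} [ConditionallyCompleteLinearOrder α]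
    [TopologicalSpace α] [OrderTopology α] [TopologicalSpace X] [TopologicalSpace Y]
    {φ : X → Y → α} {U : Set X} {K : Set Y} (hK : IsCompact K)
    (hφ : ContinuousOn (fun p : X × Y => φ p.1 p.2) (U ×ˢ K)) :
    ContinuousOn (fun x => sSup (φ x '' K)) U := by
  have : CompactSpace K := isCompact_iff_compactSpace.mp hK
  rw [continuousOn_iff_continuous_domRestrict]
  have hc : Continuous fun q : U × K => φ q.1 q.2 :=
    hφ.comp_continuous (continuous_subtype_val.prodMap continuous_subtype_val)
      fun q => ⟨q.1.2, q.2.2⟩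
  convert isCompact_univ.continuous_sSup (f := fun (x : U) (y : K) => φ x y) hc using 2 with x
  rw [image_univ, domRestrict_apply, image_eq_range]

theorem image_eq_image_compl_zero {𝕜 E α : Type*} [Zero 𝕜] [Zero E] [SMulWithZero 𝕜 E]
    {q : E → α} (hq : ∀ v (c : 𝕜), c ≠ 0 → q (c • v) = q v) {A : Set E} (hA₀ : 0 ∉ A)
    (hA : ∀ v ≠ 0, ∃ c : 𝕜, c • v ∈ A) :
    q '' A = q '' {0}ᶜ := by
  refine (image_mono fun v hv (h : v = 0) => hA₀ (h ▸ hv)).antisymm ?_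
  rintro _ ⟨v, hv, rfl⟩
  obtain ⟨c, hc⟩ := hA v hv
  have hc₀ : c ≠ 0 := by
    rintro rfl
    exact hA₀ (zero_smul 𝕜 v ▸ hc)
  exact ⟨c • v, hc, hq v c hc₀⟩

section Homogeneous

variable {𝕜 E : Type*} [RCLike 𝕜] [NormedAddCommGroup E] [NormedSpace 𝕜 E] {g h : E → ℝ}

theorem image_sphere_eq_image_compl_zero {α : Type*} {q : E → α}
    (hq : ∀ v (c : 𝕜), c ≠ 0 → q (c • v) = q v) : q '' sphere 0 1 = q '' {0}ᶜ :=
  image_eq_image_compl_zero hq (by simp) fun v hv =>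
    ⟨(‖v‖⁻¹ : 𝕜), mem_sphere_zero_iff_norm.mpr (norm_smul_inv_norm hv)⟩

theorem apply_zero_of_homogeneous (hg : ∀ v (c : 𝕜), g (c • v) = ‖c‖ ^ 2 * g v) : g 0 = 0 := by
  simpa using hg 0 0

theorem div_smul_of_homogeneous (hg : ∀ v (c : 𝕜), g (c • v) = ‖c‖ ^ 2 * g v)
    (hh : ∀ v (c : 𝕜), h (c • v) = ‖c‖ ^ 2 * h v) (v : E) {c : 𝕜} (hc : c ≠ 0) :
    h (c • v) / g (c • v) = h v / g v := by
  rw [hg, hh, mul_div_mul_left _ _ (by positivity)]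

theorem exists_smul_eq_one_of_homogeneous (hg : ∀ v (c : 𝕜), g (c • v) = ‖c‖ ^ 2 * g v)
    {v : E} (hv : 0 < g v) : ∃ c : 𝕜, g (c • v) = 1 := by
  refine ⟨((√(g v))⁻¹ : ℝ), ?_⟩
  rw [hg, RCLike.norm_ofReal, abs_inv, abs_of_pos (Real.sqrt_pos.mpr hv), inv_pow,
    Real.sq_sqrt hv.le, inv_mul_cancel₀ hv.ne']

theorem image_level_one_eq_image_sphere (hg : ∀ v (c : 𝕜), g (c • v) = ‖c‖ ^ 2 * g v)
    (hh : ∀ v (c : 𝕜), h (c • v) = ‖c‖ ^ 2 * h v) (hg_pos : ∀ v ≠ 0, 0 < g v) :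
    h '' {v | g v = 1} = (fun v => h v / g v) '' sphere 0 1 := by
  have hq := div_smul_of_homogeneous hg hh
  calc h '' {v | g v = 1} = (fun v => h v / g v) '' {v | g v = 1} :=
        image_congr fun v (hv : g v = 1) => by rw [hv, div_one]
    _ = (fun v => h v / g v) '' {0}ᶜ :=
        image_eq_image_compl_zero hq (by simp [apply_zero_of_homogeneous hg])
          fun v hv => exists_smul_eq_one_of_homogeneous hg (hg_pos v hv)
    _ = (fun v => h v / g v) '' sphere 0 1 :=
        (image_sphere_eq_image_compl_zero hq).symm

theorem le_sSup_image_sphere_mul (hg : ∀ v (c : 𝕜), g (c • v) = ‖c‖ ^ 2 * g v)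
    (hh : ∀ v (c : 𝕜), h (c • v) = ‖c‖ ^ 2 * h v) (hg_pos : ∀ v ≠ 0, 0 < g v)
    (hbdd : BddAbove ((fun v => h v / g v) '' sphere 0 1)) (v : E) :
    h v ≤ sSup ((fun v => h v / g v) '' sphere 0 1) * g v := by
  rcases eq_or_ne v 0 with rfl | hv
  · simp [apply_zero_of_homogeneous hg, apply_zero_of_homogeneous hh]
  have hmem : h v / g v ∈ (fun v => h v / g v) '' sphere 0 1 := by
    rw [image_sphere_eq_image_compl_zero (div_smul_of_homogeneous hg hh)]
    exact mem_image_of_mem _ hv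
  exact (div_le_iff₀ (hg_pos v hv)).mp (le_csSup hbdd hmem)

end Homogeneous

theorem eventually_add_smul_mem {𝕜 E : Type*} [NormedField 𝕜] [NormedAddCommGroup E]
    [NormedSpace 𝕜 E] {D : Set E} (hD : IsOpen D) {z : E} (hz : z ∈ D) (v : E) :
    ∃ ρ > 0, ∀ᶠ p in 𝓝 (z, v), ∀ t ∈ closedBall (0 : 𝕜) ρ, p.1 + t • p.2 ∈ D := by
  have hcont : ContinuousAt (fun q : (E × E) × 𝕜 => q.1.1 + q.2 • q.1.2) ((z, v), 0) := by
    fun_prop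
  have hmem := hcont.preimage_mem_nhds (by simpa using hD.mem_nhds hz)
  rw [nhds_prod_eq] at hmem
  obtain ⟨U, hU, W, hW, hUW⟩ := Filter.mem_prod_iff.mp hmem
  obtain ⟨ρ, hρ, hball⟩ := Metric.mem_nhds_iff.mp hW
  exact ⟨ρ / 2, half_pos hρ, Filter.mem_of_superset hU fun p hp t ht =>
    hUW (mk_mem_prod hp (hball (closedBall_subset_ball (half_lt_self hρ) ht)))⟩

theorem continuousOn_circleIntegral {F X : Type*} [NormedAddCommGroup F] [NormedSpace ℂ F]
    [TopologicalSpace X] {g : X → ℂ → F} {U : Set X} {c : ℂ} {R : ℝ}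
    (hg : ContinuousOn (fun p : X × ℂ => g p.1 p.2) (U ×ˢ sphere c |R|)) :
    ContinuousOn (fun x => ∮ t in C(c, R), g x t) U := by
  rw [continuousOn_iff_continuous_domRestrict]
  refine intervalIntegral.continuous_parametric_intervalIntegral_of_continuous' ?_ _ _
  simp only [deriv_circleMap]
  have hcirc (c : ℂ) : Continuous fun q : U × ℝ => circleMap c R q.2 :=
    (continuous_circleMap c R).comp continuous_snd
  exact ((hcirc 0).mul continuous_const).smul <| hg.comp_continuous
    (continuous_subtype_val.comp continuous_fst |>.prodMk (hcirc c))
    fun q => ⟨q.1.2, circleMap_mem_sphere' c R q.2⟩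

theorem fderiv_apply_eq_circleIntegral {E F : Type*} [NormedAddCommGroup E] [NormedSpace ℂ E]
    [NormedAddCommGroup F] [NormedSpace ℂ F] [CompleteSpace F] {f : E → F} {z v : E} {ρ : ℝ}
    (hρ : 0 < ρ) (hf : ∀ t ∈ closedBall (0 : ℂ) ρ, DifferentiableAt ℂ f (z + t • v)) :
    fderiv ℂ f z v = (2 * π * I)⁻¹ • ∮ t in C(0, ρ), (1 / (t - 0) ^ 2) • f (z + t • v) := by
  have hline : HasDerivAt (fun t : ℂ => f (z + t • v)) (fderiv ℂ f z v) 0 := by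
    have := (hf 0 (mem_closedBall_self hρ.le)).hasFDerivAt.comp_hasDerivAt (0 : ℂ)
      (((hasDerivAt_id (0 : ℂ)).smul_const v).const_add z)
    simpa [Function.comp_def] using this
  have hdiff : DifferentiableOn ℂ (fun t : ℂ => f (z + t • v)) (closedBall 0 ρ) := fun t ht =>
    ((hf t ht).comp t ((differentiableAt_id.smul_const v).const_add z)).differentiableWithinAt
  rw [hdiff.deriv_eq_smul_circleIntegral hρ, hline.deriv, smul_smul,
    inv_mul_cancel₀ two_pi_I_ne_zero, one_smul]

theorem DifferentiableOn.continuousOn_fderiv_apply {E F : Type*} [NormedAddCommGroup E]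
    [NormedSpace ℂ E] [NormedAddCommGroup F] [NormedSpace ℂ F] [CompleteSpace F] {f : E → F}
    {D : Set E} (hf : DifferentiableOn ℂ f D) (hD : IsOpen D) :
    ContinuousOn (fun p : E × E => fderiv ℂ f p.1 p.2) (D ×ˢ univ) := by
  rintro ⟨z, v⟩ ⟨hz, -⟩
  obtain ⟨ρ, hρ, hline⟩ := eventually_add_smul_mem (𝕜 := ℂ) hD hz v
  obtain ⟨U, hUline, hU, hzvU⟩ := _root_.eventually_nhds_iff.mp hline
  have hdiff : ∀ p ∈ U, ∀ t ∈ closedBall (0 : ℂ) ρ, DifferentiableAt ℂ f (p.1 + t • p.2) :=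
    fun p hp t ht => hf.differentiableAt (hD.mem_nhds (hUline p hp t ht))
  have hintegrand : ContinuousOn
      (fun q : (E × E) × ℂ => (1 / (q.2 - 0) ^ 2) • f (q.1.1 + q.2 • q.1.2))
      (U ×ˢ sphere 0 |ρ|) := by
    rintro ⟨p, t⟩ ⟨hp, ht⟩
    rw [abs_of_pos hρ] at ht
    have ht0 : t ≠ 0 := ne_of_mem_sphere ht hρ.ne'
    refine ContinuousAt.continuousWithinAt ?_
    refine ContinuousAt.smul ?_ ((hdiff p hp t (sphere_subset_closedBall ht)).continuousAt.comp
      (f := fun q : (E × E) × ℂ => q.1.1 + q.2 • q.1.2) (by fun_prop))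
    exact continuousAt_const.div (by fun_prop) (by simpa using ht0)
  have hformula := (continuousOn_circleIntegral
    (g := fun (p : E × E) (t : ℂ) => (1 / (t - 0) ^ 2) • f (p.1 + t • p.2))
    hintegrand).const_smul (2 * π * I)⁻¹
  refine ((hformula.continuousAt (hU.mem_nhds hzvU)).congr ?_).continuousWithinAt
  filter_upwards [hU.mem_nhds hzvU] with p hp
  exact (fderiv_apply_eq_circleIntegral hρ (hdiff p hp)).symm

theorem pullback_finsler_le_general {n m : ℕ}
    (D : Set (EuclideanSpace ℂ (Fin n))) (D' : Set (EuclideanSpace ℂ (Fin m)))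
    (hD : IsOpen D)
    (G : EuclideanSpace ℂ (Fin n) → EuclideanSpace ℂ (Fin n) → ℝ)
    (H : EuclideanSpace ℂ (Fin m) → EuclideanSpace ℂ (Fin m) → ℝ)
    -- G is a complex Finsler metric on D
    (hGcont : ContinuousOn (fun p => G p.1 p.2) (D ×ˢ (Set.univ : Set (EuclideanSpace ℂ (Fin n)))))
    (hGnonneg : ∀ z ∈ D, ∀ v, 0 ≤ G z v)
    (hGzero : ∀ z ∈ D, ∀ v, G z v = 0 ↔ v = 0)
    (hGhom : ∀ z ∈ D, ∀ (v) (ζ : ℂ), G z (ζ • v) = ‖ζ‖ ^ 2 * G z v)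
    -- H is a complex Finsler metric on D'
    (hHcont : ContinuousOn (fun p => H p.1 p.2) (D' ×ˢ (Set.univ : Set (EuclideanSpace ℂ (Fin m)))))
    (hHhom : ∀ w ∈ D', ∀ (ξ) (ζ : ℂ), H w (ζ • ξ) = ‖ζ‖ ^ 2 * H w ξ)
    -- f : D → D' is holomorphic
    (f : EuclideanSpace ℂ (Fin n) → EuclideanSpace ℂ (Fin m))
    (hf : DifferentiableOn ℂ f D) (hfD : Set.MapsTo f D D')
    -- the fiberwise supremum
    (ut : EuclideanSpace ℂ (Fin n) → ℝ)
    (hut : ∀ z ∈ D, ut z =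
      sSup ((fun v => H (f z) (fderiv ℂ f z v)) '' {v : EuclideanSpace ℂ (Fin n) | G z v = 1})) :
    ContinuousOn ut D ∧
    ∀ z ∈ D, ∀ v : EuclideanSpace ℂ (Fin n),
      H (f z) (fderiv ℂ f z v) ≤ ut z * G z v := by
  have hGpos : ∀ z ∈ D, ∀ v ≠ 0, 0 < G z v := fun z hz v hv =>
    (hGnonneg z hz v).lt_of_ne' fun h => hv ((hGzero z hz v).mp h)
  have hpush : ∀ z ∈ D, ∀ v (ζ : ℂ),
      H (f z) (fderiv ℂ f z (ζ • v)) = ‖ζ‖ ^ 2 * H (f z) (fderiv ℂ f z v) := fun z hz v ζ => by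
    rw [map_smul, hHhom (f z) (hfD hz)]
  have hratio : ContinuousOn (fun p : _ × _ => H (f p.1) (fderiv ℂ f p.1 p.2) / G p.1 p.2)
      (D ×ˢ sphere 0 1) := by
    refine ContinuousOn.div ?_ (hGcont.mono (prod_mono_right (subset_univ _)))
      fun p hp => (hGpos p.1 hp.1 p.2 (ne_of_mem_sphere hp.2 one_ne_zero)).ne'
    refine (hHcont.comp ((hf.continuousOn.comp continuousOn_fst fun p hp => hp.1).prodMk
      (hf.continuousOn_fderiv_apply hD)) fun p hp => ⟨hfD hp.1, trivial⟩).mono ?_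
    exact prod_mono_right (subset_univ _)
  have hut_sphere : ∀ z ∈ D,
      ut z = sSup ((fun v => H (f z) (fderiv ℂ f z v) / G z v) '' sphere 0 1) := fun z hz => by
    rw [hut z hz, image_level_one_eq_image_sphere (hGhom z hz) (hpush z hz) (hGpos z hz)]
  constructor
  · exact ((isCompact_sphere 0 1).continuousOn_sSup_image hratio).congr hut_sphere
  intro z hz v
  have hbdd : BddAbove ((fun v => H (f z) (fderiv ℂ f z v) / G z v) '' sphere 0 1) :=
    (isCompact_sphere 0 1).bddAbove_image
      (hratio.comp (continuous_const.prodMk continuous_id).continuousOn fun w hw => ⟨hz, hw⟩)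
  rw [hut_sphere z hz]
  exact le_sSup_image_sphere_mul (hGhom z hz) (hpush z hz) (hGpos z hz) hbdd v

/-- The local (coordinate-chart) form of Theorem 1.3 / Theorem 4.1 of the
paper, with the explicit optimal factor: if `G`, `H` are complex Finsler
metrics on open sets `D ⊆ ℂⁿ`, `D' ⊆ ℂᵐ` and `f : D → D'` is holomorphic, then
`ũ(z) = sup {H(f(z), f'(z)v) : G(z,v) = 1}` is continuous on `D` and
`H(f(z), f'(z)v) ≤ ũ(z) G(z,v)` for all `z ∈ D`, `v ∈ ℂⁿ`. -/
theorem pullback_finsler_le {n m : ℕ} (hn : 1 ≤ n) (hm : 1 ≤ m)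
    (D : Set (EuclideanSpace ℂ (Fin n))) (D' : Set (EuclideanSpace ℂ (Fin m)))
    (hD : IsOpen D) (hD' : IsOpen D')
    (G : EuclideanSpace ℂ (Fin n) → EuclideanSpace ℂ (Fin n) → ℝ)
    (H : EuclideanSpace ℂ (Fin m) → EuclideanSpace ℂ (Fin m) → ℝ)
    -- G is a complex Finsler metric on D
    (hGcont : ContinuousOn (fun p => G p.1 p.2) (D ×ˢ (Set.univ : Set (EuclideanSpace ℂ (Fin n)))))
    (hGnonneg : ∀ z ∈ D, ∀ v, 0 ≤ G z v)
    (hGzero : ∀ z ∈ D, ∀ v, G z v = 0 ↔ v = 0)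
    (hGhom : ∀ z ∈ D, ∀ (v) (ζ : ℂ), G z (ζ • v) = ‖ζ‖ ^ 2 * G z v)
    -- H is a complex Finsler metric on D'
    (hHcont : ContinuousOn (fun p => H p.1 p.2) (D' ×ˢ (Set.univ : Set (EuclideanSpace ℂ (Fin m)))))
    (hHnonneg : ∀ w ∈ D', ∀ ξ, 0 ≤ H w ξ)
    (hHzero : ∀ w ∈ D', ∀ ξ, H w ξ = 0 ↔ ξ = 0)
    (hHhom : ∀ w ∈ D', ∀ (ξ) (ζ : ℂ), H w (ζ • ξ) = ‖ζ‖ ^ 2 * H w ξ)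
    -- f : D → D' is holomorphic
    (f : EuclideanSpace ℂ (Fin n) → EuclideanSpace ℂ (Fin m))
    (hf : DifferentiableOn ℂ f D) (hfD : Set.MapsTo f D D')
    -- the fiberwise supremum
    (ut : EuclideanSpace ℂ (Fin n) → ℝ)
    (hut : ∀ z ∈ D, ut z =
      sSup ((fun v => H (f z) (fderiv ℂ f z v)) '' {v : EuclideanSpace ℂ (Fin n) | G z v = 1})) :
    ContinuousOn ut D ∧
    ∀ z ∈ D, ∀ v : EuclideanSpace ℂ (Fin n),
      H (f z) (fderiv ℂ f z v) ≤ ut z * G z v :=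
  pullback_finsler_le_general D D' hD G H hGcont hGnonneg hGzero hGhom hHcont hHhom f hf hfD ut hut
end

section
/- For every real r > 0 and every real K > 0 there exists a real number α > 1 such that (α−1)²/((2α−1)·r) = K²·r/(2α+1), and for this α one has α²/((2α−1)·r) + K²·r/(2α+1) ≤ 1/r + K. -/
/-! With `β = K r`, balancing the two error terms means `α` is a root of the cubic
`(α - 1)² (2α + 1) = β² (2α - 1)`, which has a root `α > 1` by the intermediate value theorem.
Since `α² = (2α - 1) + (α - 1)²`, the bound is `1/r` plus twice the balanced term `K² r/(2α + 1)`,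
and the cubic forces `2β ≤ 2α + 1`, so that twice this term is at most `K`. -/

lemma exists_one_lt_sub_one_sq_mul_eq (β : ℝ) (hβ : 0 < β) :
    ∃ α : ℝ, 1 < α ∧ (α - 1) ^ 2 * (2 * α + 1) = β ^ 2 * (2 * α - 1) := by
  set f : ℝ → ℝ := fun x => (x - 1) ^ 2 * (2 * x + 1) - β ^ 2 * (2 * x - 1)
  have hf_one : f 1 < 0 := by simp only [f]; nlinarith
  -- at `β + 2` the first term is `(β + 1)² (2β + 5)` and the second `β² (2β + 3)`
  have hf_far : 0 < f (β + 2) := by simp only [f]; nlinarith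
  obtain ⟨α, hα, hfα⟩ := intermediate_value_Icc (by linarith : (1 : ℝ) ≤ β + 2)
    (by fun_prop : Continuous f).continuousOn ⟨hf_one.le, hf_far.le⟩
  refine ⟨α, lt_of_le_of_ne hα.1 ?_, by simp only [f] at hfα; linarith⟩
  rintro rfl
  exact hf_one.ne hfα

lemma two_mul_le_of_sub_one_sq_mul_eq {α β : ℝ} (hα : 5 / 8 ≤ α) (hβ : 0 ≤ β)
    (h : (α - 1) ^ 2 * (2 * α + 1) = β ^ 2 * (2 * α - 1)) : 2 * β ≤ 2 * α + 1 := by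
  have hpos : 0 < 2 * α - 1 := by linarith
  -- `4 (α - 1)² ≤ (2α - 1)(2α + 1)` is equivalent to `5 ≤ 8α`
  have hsq : (2 * β) ^ 2 ≤ (2 * α + 1) ^ 2 := by
    refine le_of_mul_le_mul_right ?_ hpos
    nlinarith
  exact (pow_le_pow_iff_left₀ (by positivity) (by linarith) two_ne_zero).mp hsq

lemma sq_div_eq_one_div_add_sub_one_sq_div {α : ℝ} (hα : 2 * α - 1 ≠ 0) (r : ℝ) :
    α ^ 2 / ((2 * α - 1) * r) = 1 / r + (α - 1) ^ 2 / ((2 * α - 1) * r) := by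
  rw [one_div, ← div_mul_cancel_left₀ hα r, ← add_div]
  ring_nf

/-- The analytic optimization at the heart of the Hessian comparison
`H(ρ)(u,u) ≤ 1/ρ + K` (Theorem 3.2 of the paper): for all `r > 0` and `K > 0`
there exists `α > 1` balancing the two error terms, for which the index-form
upper bound `α²/((2α−1)r) + K²r/(2α+1)` is at most `1/r + K`. -/
theorem exists_alpha_index_form_bound (r K : ℝ) (hr : 0 < r) (hK : 0 < K) :
    ∃ α : ℝ, 1 < α ∧
      (α - 1) ^ 2 / ((2 * α - 1) * r) = K ^ 2 * r / (2 * α + 1) ∧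
      α ^ 2 / ((2 * α - 1) * r) + K ^ 2 * r / (2 * α + 1) ≤ 1 / r + K := by
  obtain ⟨α, hα, hcubic⟩ := exists_one_lt_sub_one_sq_mul_eq (K * r) (mul_pos hK hr)
  have hminus : 0 < 2 * α - 1 := by linarith
  have hplus : 0 < 2 * α + 1 := by linarith
  have hbalance : (α - 1) ^ 2 / ((2 * α - 1) * r) = K ^ 2 * r / (2 * α + 1) := by
    rw [div_eq_div_iff (mul_pos hminus hr).ne' hplus.ne']
    linear_combination hcubic
  have hKr := two_mul_le_of_sub_one_sq_mul_eq (by linarith) (mul_pos hK hr).le hcubic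
  have hterm : K ^ 2 * r / (2 * α + 1) ≤ K / 2 := by
    rw [div_le_iff₀ hplus]
    nlinarith
  refine ⟨α, hα, hbalance, ?_⟩
  rw [sq_div_eq_one_div_add_sub_one_sq_div hminus.ne', hbalance]
  linarith
end

section
/- Let f : ℝ → ℝ be given by f(x) = (arctanh x)². Then for every r ∈ (0,1), ((1−r²)²/4) · ( f''(r) + f'(r)/r ) ≤ 2·(1 + 2·arctanh r), where f' and f'' denote the first and second derivatives of f. -/
/-- The inverse hyperbolic tangent, `arctanh x = (1/2) log((1+x)/(1−x))`.
On the unit disc with the Poincaré metric of Gaussian curvature `−4`, the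
distance from `0` to `ζ` is `arctanh |ζ|`. -/
noncomputable def arctanh (x : ℝ) : ℝ := (1 / 2) * Real.log ((1 + x) / (1 - x))

/-!
With `a = arctanh r`, one has `f' = 2a/(1-r²)` and `f'' = (2 + 4ra)/(1-r²)²`, so the left-hand
side equals `1/2 + ra + (1-r²)a/(2r)`. The bound `log y ≤ y - 1` at `y = (1+r)/(1-r)` gives
`a ≤ r/(1-r)`, hence `(1-r²)a/(2r) ≤ (1+r)/2 ≤ 1`, and `ra ≤ a` finishes the estimate.
-/

open Set Topology

theorem arctanh_eq_artanh {x : ℝ} (hx : x ∈ Icc (-1) 1) : arctanh x = Real.artanh x :=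
  (Real.artanh_eq_half_log hx).symm

theorem arctanh_nonneg {x : ℝ} (hx : x ∈ Icc 0 1) : 0 ≤ arctanh x := by
  rw [arctanh_eq_artanh ⟨by linarith [hx.1], hx.2⟩]
  exact Real.artanh_nonneg hx.1

theorem arctanh_le_div_one_sub {x : ℝ} (hx : x ∈ Ioo (-1) 1) : arctanh x ≤ x / (1 - x) := by
  obtain ⟨h₁, h₂⟩ := hx
  have hlog :=
    Real.log_le_sub_one_of_pos (div_pos (by linarith : 0 < 1 + x) (by linarith : 0 < 1 - x))
  have hsub : (1 + x) / (1 - x) - 1 = 2 * (x / (1 - x)) := by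
    field_simp [(by linarith : 1 - x ≠ 0)]
    ring
  unfold arctanh
  linarith

theorem hasDerivAt_arctanh {x : ℝ} (hx : x ∈ Ioo (-1) 1) :
    HasDerivAt arctanh (1 - x ^ 2)⁻¹ x := by
  obtain ⟨h₁, h₂⟩ := hx
  have hp : 1 + x ≠ 0 := by linarith
  have hm : 1 - x ≠ 0 := by linarith
  have hquot : HasDerivAt (fun y => (1 + y) / (1 - y))
      ((1 * (1 - x) - (1 + x) * (-1)) / (1 - x) ^ 2) x :=
    ((hasDerivAt_id x).const_add 1).div ((hasDerivAt_id x).const_sub 1) hm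
  have hlog : HasDerivAt arctanh _ x := (hquot.log (div_ne_zero hp hm)).const_mul (1 / 2)
  refine hlog.congr_deriv ?_
  rw [show 1 - x ^ 2 = (1 + x) * (1 - x) by ring]
  field_simp
  ring

theorem hasDerivAt_arctanh_sq {x : ℝ} (hx : x ∈ Ioo (-1) 1) :
    HasDerivAt (fun y => arctanh y ^ 2) (2 * arctanh x / (1 - x ^ 2)) x := by
  refine ((hasDerivAt_arctanh hx).pow 2).congr_deriv ?_
  norm_num [div_eq_mul_inv]

theorem hasDerivAt_deriv_arctanh_sq {x : ℝ} (hx : x ∈ Ioo (-1) 1) :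
    HasDerivAt (deriv fun y => arctanh y ^ 2)
      ((2 + 4 * x * arctanh x) / (1 - x ^ 2) ^ 2) x := by
  have hderiv :
      (deriv fun y => arctanh y ^ 2) =ᶠ[𝓝 x] fun y => 2 * arctanh y / (1 - y ^ 2) := by
    filter_upwards [isOpen_Ioo.mem_nhds hx] with y hy using (hasDerivAt_arctanh_sq hy).deriv
  have hden : HasDerivAt (fun y => 1 - y ^ 2) (-(2 * x)) x := by
    simpa using (hasDerivAt_pow 2 x).const_sub 1
  have hne : 1 - x ^ 2 ≠ 0 := by nlinarith [hx.1, hx.2]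
  refine (((hasDerivAt_arctanh hx).const_mul 2).div hden hne).congr_of_eventuallyEq hderiv
    |>.congr_deriv ?_
  field_simp
  ring

/-- The explicit form of Remark 5.1 of the paper (the disc instance of
Lemma 4.3): with `f(x) = (arctanh x)²`, so that `ϱ²(ζ) = f(|ζ|)` is the squared
Poincaré distance from the origin, for every `r ∈ (0,1)` the complex Hessian
`∂²ϱ²/∂ζ∂ζ̄ = (1/4)(f''(r) + f'(r)/r)` evaluated on a Poincaré-unit tangent
vector (of Euclidean length `1−r²`) is at most `2(1 + 2 arctanh r)`. -/
theorem poincare_sq_dist_hessian_bound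
    (f : ℝ → ℝ) (hf : ∀ x, f x = (arctanh x) ^ 2)
    (r : ℝ) (hr : r ∈ Set.Ioo (0 : ℝ) 1) :
    ((1 - r ^ 2) ^ 2 / 4) * (deriv (deriv f) r + deriv f r / r)
      ≤ 2 * (1 + 2 * arctanh r) := by
  obtain ⟨hr₀, hr₁⟩ := hr
  have hr : r ∈ Ioo (-1) 1 := ⟨by linarith, hr₁⟩
  obtain rfl : f = fun x => arctanh x ^ 2 := funext hf
  rw [(hasDerivAt_deriv_arctanh_sq hr).deriv, (hasDerivAt_arctanh_sq hr).deriv]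
  set a := arctanh r
  have ha₀ : 0 ≤ a := arctanh_nonneg ⟨hr₀.le, hr₁.le⟩
  have ha₁ : a * (1 - r) ≤ r := (le_div_iff₀ (by linarith)).mp (arctanh_le_div_one_sub hr)
  have hne : 1 - r ^ 2 ≠ 0 := by nlinarith
  have hlhs : (1 - r ^ 2) ^ 2 / 4 * ((2 + 4 * r * a) / (1 - r ^ 2) ^ 2 + 2 * a / (1 - r ^ 2) / r)
      = 1 / 2 + r * a + (1 - r ^ 2) * a / (2 * r) := by
    field_simp
    ring
  have hra : r * a ≤ a := mul_le_of_le_one_left ha₀ hr₁.le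
  have hcross : (1 - r ^ 2) * a / (2 * r) ≤ 1 := by
    rw [div_le_one (by linarith)]
    nlinarith
  rw [hlhs]
  linarith
end
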